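/- Let f(θ) = sin θ · ((3θ − π) cos θ − sin(3θ)) / (2(1 − sin θ)^4) for θ ∈ (−π/2, π/2). Then f(π/3) = 0 and f'(π/3) > 0. -/

import Mathlib

open Real

noncomputable def fTri : ℝ → ℝ := fun θ =>
  Real.sin θ * ((3 * θ - π) * Real.cos θ - Real.sin (3 * θ)) / (2 * (1 - Real.sin θ) ^ 4)

/-! Write `fTri = u · g` with `g θ = (3θ - π) cos θ - sin 3θ`. Since `g (π/3) = 0`, the product rule
gives `fTri' (π/3) = u (π/3) · g' (π/3)`, where `u (π/3) > 0` and `g' (π/3) = 3/2 + 3 = 9/2`. -/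

theorem HasDerivAt.mul_of_apply_eq_zero {𝕜 : Type*} [NontriviallyNormedField 𝕜] {u g : 𝕜 → 𝕜}
    {a g' : 𝕜} (hu : DifferentiableAt 𝕜 u a) (hg : HasDerivAt g g' a) (hga : g a = 0) :
    HasDerivAt (fun x => u x * g x) (u a * g') a := by
  have h := hu.hasDerivAt.mul hg
  rwa [hga, mul_zero, zero_add] at h

theorem hasDerivAt_sub_sin_three_mul :
    HasDerivAt (fun θ => (3 * θ - π) * cos θ - sin (3 * θ)) (9 / 2) (π / 3) := by
  have hlin : HasDerivAt (fun θ : ℝ => 3 * θ) 3 (π / 3) := by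
    simpa using (hasDerivAt_id (π / 3)).const_mul (3 : ℝ)
  have h : HasDerivAt (fun θ => (3 * θ - π) * cos θ - sin (3 * θ))
      (3 * cos (π / 3) + (3 * (π / 3) - π) * -sin (π / 3) - cos (3 * (π / 3)) * 3) (π / 3) :=
    ((hlin.sub_const π).mul (hasDerivAt_cos _)).sub ((hasDerivAt_sin _).comp _ hlin)
  refine h.congr_deriv ?_
  rw [show 3 * (π / 3) = π by ring, cos_pi, cos_pi_div_three]
  ring

theorem sin_pi_div_three_lt_one : sin (π / 3) < 1 := by
  rw [sin_pi_div_three, div_lt_one two_pos, sqrt_lt' two_pos]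
  norm_num

theorem stmt_7 : fTri (π / 3) = 0 ∧ 0 < deriv fTri (π / 3) := by
  have hfactor : fTri = fun θ => sin θ / (2 * (1 - sin θ) ^ 4) *
      ((3 * θ - π) * cos θ - sin (3 * θ)) := by
    funext θ
    exact mul_div_right_comm _ _ _
  have hg : (3 * (π / 3) - π) * cos (π / 3) - sin (3 * (π / 3)) = 0 := by
    simp [show 3 * (π / 3) = π by ring]
  have hsin_pos : 0 < sin (π / 3) := sin_pos_of_pos_of_lt_pi (by positivity) (by linarith [pi_pos])
  have hsin_lt : 0 < 1 - sin (π / 3) := sub_pos.2 sin_pi_div_three_lt_one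
  have hu : DifferentiableAt ℝ (fun θ => sin θ / (2 * (1 - sin θ) ^ 4)) (π / 3) := by
    fun_prop (disch := positivity)
  rw [hfactor]
  refine ⟨mul_eq_zero_of_right _ hg, ?_⟩
  rw [(HasDerivAt.mul_of_apply_eq_zero hu hasDerivAt_sub_sin_three_mul hg).deriv]
  positivity
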